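/- For d×d matrices A and B, the map Λ(A,B) = tr_{123}[F (A ⊗ B ⊗ C ⊗ 1)] with F = (1/6){2[(14)^{T_4} + (24)^{T_4} + (34)^{T_4}] − [(123)(14)^{T_4} + (123)(24)^{T_4} + (123)(34)^{T_4} + (132)(14)^{T_4} + (132)(24)^{T_4} + (132)(34)^{T_4}]} evaluated on three matrices A, B, C equals (1/3)[tr(B)tr(C)A^T + tr(A)tr(C)B^T + tr(A)tr(B)C^T] − (1/6)[(ACB)^T + (BAC)^T + (CBA)^T + (ABC)^T + (BCA)^T + (CAB)^T]. -/

import Mathlib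

/-!
The operator `(k 4)^{T_4}` is the unnormalised maximally entangled projector on legs `k, 4`
tensored with the identity on the other two legs. Against `A ⊗ B ⊗ C ⊗ 1` and under `tr_{123}`
it therefore transposes the `k`-th factor onto leg 4 and traces out the other two, while
precomposing with a 3-cycle chains the three factors into a single transposed product instead.
Each of the nine terms of `F` is thus an index contraction, and the theorem is their linear
combination.
-/

open Matrix

/-- The operator of the transposition `(a b)` on `(ℂ^d)^{⊗4}`. -/
noncomputable def swOp (d : ℕ) (a b : Fin 4) :
    Matrix (Fin 4 → Fin d) (Fin 4 → Fin d) ℂ :=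
  Matrix.of fun i j => if ∀ t, i t = j (Equiv.swap a b t) then 1 else 0

/-- The cycle (123) (fixing leg 4) on `(ℂ^d)^{⊗4}`. -/
noncomputable def permOp123of4 (d : ℕ) :
    Matrix (Fin 4 → Fin d) (Fin 4 → Fin d) ℂ :=
  Matrix.of fun i j =>
    if i 0 = j 2 ∧ i 1 = j 0 ∧ i 2 = j 1 ∧ i 3 = j 3 then 1 else 0

/-- The cycle (132) (fixing leg 4) on `(ℂ^d)^{⊗4}`. -/
noncomputable def permOp132of4 (d : ℕ) :
    Matrix (Fin 4 → Fin d) (Fin 4 → Fin d) ℂ :=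
  Matrix.of fun i j =>
    if i 0 = j 1 ∧ i 1 = j 2 ∧ i 2 = j 0 ∧ i 3 = j 3 then 1 else 0

/-- Partial transpose on the fourth tensor factor. -/
noncomputable def pt4 {d : ℕ} (M : Matrix (Fin 4 → Fin d) (Fin 4 → Fin d) ℂ) :
    Matrix (Fin 4 → Fin d) (Fin 4 → Fin d) ℂ :=
  Matrix.of fun i j =>
    M (Function.update i 3 (j 3)) (Function.update j 3 (i 3))

/-- The operator `F` built from partially transposed permutation operators. -/
noncomputable def Fop (d : ℕ) : Matrix (Fin 4 → Fin d) (Fin 4 → Fin d) ℂ :=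
  (6 : ℂ)⁻¹ •
    ((2 : ℂ) • (pt4 (swOp d 0 3) + pt4 (swOp d 1 3) + pt4 (swOp d 2 3)) -
      (permOp123of4 d * pt4 (swOp d 0 3) + permOp123of4 d * pt4 (swOp d 1 3) +
        permOp123of4 d * pt4 (swOp d 2 3) + permOp132of4 d * pt4 (swOp d 0 3) +
        permOp132of4 d * pt4 (swOp d 1 3) + permOp132of4 d * pt4 (swOp d 2 3)))

/-- `A ⊗ B ⊗ C ⊗ 1` on `(ℂ^d)^{⊗4}`. -/
noncomputable def kron4 {d : ℕ} (A B C : Matrix (Fin d) (Fin d) ℂ) :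
    Matrix (Fin 4 → Fin d) (Fin 4 → Fin d) ℂ :=
  Matrix.of fun i j =>
    A (i 0) (j 0) * B (i 1) (j 1) * C (i 2) (j 2) * (if i 3 = j 3 then 1 else 0)

/-- Partial trace over the first three of four tensor factors. -/
noncomputable def ptr123of4 {d : ℕ}
    (M : Matrix (Fin 4 → Fin d) (Fin 4 → Fin d) ℂ) : Matrix (Fin d) (Fin d) ℂ :=
  Matrix.of fun a b => ∑ x : Fin d, ∑ y : Fin d, ∑ z : Fin d,
    M ![x, y, z, a] ![x, y, z, b]

theorem sum_fun_fin_succ {α M : Type*} [Fintype α] [AddCommMonoid M] {n : ℕ}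
    (f : (Fin (n + 1) → α) → M) :
    ∑ x, f x = ∑ a, ∑ x : Fin n → α, f (Fin.cons a x) := by
  rw [← (Fin.consEquiv fun _ => α).sum_comp, Fintype.sum_prod_type]
  rfl

theorem sum_fun_fin_four {α M : Type*} [Fintype α] [AddCommMonoid M]
    (f : (Fin 4 → α) → M) :
    ∑ x, f x = ∑ a, ∑ b, ∑ c, ∑ e, f ![a, b, c, e] := by
  simp only [sum_fun_fin_succ, Fintype.sum_unique]
  rfl

theorem permOp123of4_mul_apply {d : ℕ} (M : Matrix (Fin 4 → Fin d) (Fin 4 → Fin d) ℂ)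
    (x y z a : Fin d) (j : Fin 4 → Fin d) :
    (permOp123of4 d * M) ![x, y, z, a] j = M ![y, z, x, a] j := by
  rw [Matrix.mul_apply, Fintype.sum_eq_single ![y, z, x, a]]
  · simp [permOp123of4]
  · intro k hk
    simp only [permOp123of4, Matrix.of_apply, ite_mul, one_mul, zero_mul, ite_eq_right_iff]
    exact fun h => absurd (by ext t; fin_cases t <;> simp_all) hk

theorem permOp132of4_mul_apply {d : ℕ} (M : Matrix (Fin 4 → Fin d) (Fin 4 → Fin d) ℂ)
    (x y z a : Fin d) (j : Fin 4 → Fin d) :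
    (permOp132of4 d * M) ![x, y, z, a] j = M ![z, x, y, a] j := by
  rw [Matrix.mul_apply, Fintype.sum_eq_single ![z, x, y, a]]
  · simp [permOp132of4]
  · intro k hk
    simp only [permOp132of4, Matrix.of_apply, ite_mul, one_mul, zero_mul, ite_eq_right_iff]
    exact fun h => absurd (by ext t; fin_cases t <;> simp_all) hk

theorem pt4_swOp_zero_apply {d : ℕ} (x y z a u v w b : Fin d) :
    pt4 (swOp d 0 3) ![x, y, z, a] ![u, v, w, b] =
      if x = a ∧ y = v ∧ z = w ∧ b = u then 1 else 0 := by
  simp only [pt4, swOp, Matrix.of_apply]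
  exact if_congr (by simp [Fin.forall_fin_succ, Equiv.swap_apply_def]) rfl rfl

theorem pt4_swOp_one_apply {d : ℕ} (x y z a u v w b : Fin d) :
    pt4 (swOp d 1 3) ![x, y, z, a] ![u, v, w, b] =
      if x = u ∧ y = a ∧ z = w ∧ b = v then 1 else 0 := by
  simp only [pt4, swOp, Matrix.of_apply]
  exact if_congr (by simp [Fin.forall_fin_succ, Equiv.swap_apply_def]) rfl rfl

theorem pt4_swOp_two_apply {d : ℕ} (x y z a u v w b : Fin d) :
    pt4 (swOp d 2 3) ![x, y, z, a] ![u, v, w, b] =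
      if x = u ∧ y = v ∧ z = a ∧ b = w then 1 else 0 := by
  simp only [pt4, swOp, Matrix.of_apply]
  exact if_congr (by simp [Fin.forall_fin_succ, Equiv.swap_apply_def]) rfl rfl

theorem ptr123of4_add {d : ℕ} (M N : Matrix (Fin 4 → Fin d) (Fin 4 → Fin d) ℂ) :
    ptr123of4 (M + N) = ptr123of4 M + ptr123of4 N := by
  ext a b
  simp [ptr123of4, Finset.sum_add_distrib]

theorem ptr123of4_sub {d : ℕ} (M N : Matrix (Fin 4 → Fin d) (Fin 4 → Fin d) ℂ) :
    ptr123of4 (M - N) = ptr123of4 M - ptr123of4 N := by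
  ext a b
  simp [ptr123of4, Finset.sum_sub_distrib]

theorem ptr123of4_smul {d : ℕ} (c : ℂ) (M : Matrix (Fin 4 → Fin d) (Fin 4 → Fin d) ℂ) :
    ptr123of4 (c • M) = c • ptr123of4 M := by
  ext a b
  simp [ptr123of4, Finset.mul_sum]

theorem ptr123of4_mul_kron4_apply {d : ℕ} (M : Matrix (Fin 4 → Fin d) (Fin 4 → Fin d) ℂ)
    (A B C : Matrix (Fin d) (Fin d) ℂ) (a b : Fin d) :
    ptr123of4 (M * kron4 A B C) a b = ∑ x, ∑ y, ∑ z, ∑ u, ∑ v, ∑ w,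
      M ![x, y, z, a] ![u, v, w, b] * (A u x * B v y * C w z) := by
  simp only [ptr123of4, kron4, Matrix.mul_apply, Matrix.of_apply, sum_fun_fin_four,
    Matrix.cons_val_zero, Matrix.cons_val_one, Matrix.cons_val_two, Matrix.cons_val_three,
    Matrix.head_cons, Matrix.tail_cons, mul_ite, mul_one, mul_zero, Finset.sum_ite_eq',
    Finset.mem_univ, if_true]

section

variable {d : ℕ} (A B C : Matrix (Fin d) (Fin d) ℂ)

theorem ptr123of4_pt4_swOp_zero_mul_kron4 :
    ptr123of4 (pt4 (swOp d 0 3) * kron4 A B C) = (B.trace * C.trace) • Aᵀ := by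
  ext a b
  simp [ptr123of4_mul_kron4_apply, pt4_swOp_zero_apply, ite_and, ← Finset.mul_sum,
    ← Finset.sum_mul, Matrix.trace, mul_comm, mul_left_comm]

theorem ptr123of4_pt4_swOp_one_mul_kron4 :
    ptr123of4 (pt4 (swOp d 1 3) * kron4 A B C) = (A.trace * C.trace) • Bᵀ := by
  ext a b
  simp [ptr123of4_mul_kron4_apply, pt4_swOp_one_apply, ite_and, ← Finset.mul_sum,
    ← Finset.sum_mul, Matrix.trace, mul_comm, mul_left_comm]

theorem ptr123of4_pt4_swOp_two_mul_kron4 :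
    ptr123of4 (pt4 (swOp d 2 3) * kron4 A B C) = (A.trace * B.trace) • Cᵀ := by
  ext a b
  simp [ptr123of4_mul_kron4_apply, pt4_swOp_two_apply, ite_and, ← Finset.mul_sum,
    ← Finset.sum_mul, Matrix.trace, mul_comm, mul_left_comm]

theorem ptr123of4_permOp123of4_mul_pt4_swOp_zero_mul_kron4 :
    ptr123of4 (permOp123of4 d * pt4 (swOp d 0 3) * kron4 A B C) = (A * C * B)ᵀ := by
  ext a b
  rw [ptr123of4_mul_kron4_apply]
  simp only [permOp123of4_mul_apply, pt4_swOp_zero_apply]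
  simp [ite_and, Matrix.mul_assoc, Matrix.mul_apply, Finset.mul_sum, mul_comm, mul_left_comm]

theorem ptr123of4_permOp123of4_mul_pt4_swOp_one_mul_kron4 :
    ptr123of4 (permOp123of4 d * pt4 (swOp d 1 3) * kron4 A B C) = (B * A * C)ᵀ := by
  ext a b
  rw [ptr123of4_mul_kron4_apply]
  simp only [permOp123of4_mul_apply, pt4_swOp_one_apply]
  simp [ite_and, Matrix.mul_apply, Finset.mul_sum, mul_comm, mul_left_comm]

theorem ptr123of4_permOp123of4_mul_pt4_swOp_two_mul_kron4 :
    ptr123of4 (permOp123of4 d * pt4 (swOp d 2 3) * kron4 A B C) = (C * B * A)ᵀ := by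
  ext a b
  rw [ptr123of4_mul_kron4_apply]
  simp only [permOp123of4_mul_apply, pt4_swOp_two_apply]
  simp [ite_and, Matrix.mul_apply, Finset.mul_sum, mul_comm, mul_left_comm]

theorem ptr123of4_permOp132of4_mul_pt4_swOp_zero_mul_kron4 :
    ptr123of4 (permOp132of4 d * pt4 (swOp d 0 3) * kron4 A B C) = (A * B * C)ᵀ := by
  ext a b
  rw [ptr123of4_mul_kron4_apply]
  simp only [permOp132of4_mul_apply, pt4_swOp_zero_apply]
  simp [ite_and, Matrix.mul_assoc, Matrix.mul_apply, Finset.mul_sum, mul_comm, mul_left_comm]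

theorem ptr123of4_permOp132of4_mul_pt4_swOp_one_mul_kron4 :
    ptr123of4 (permOp132of4 d * pt4 (swOp d 1 3) * kron4 A B C) = (B * C * A)ᵀ := by
  ext a b
  rw [ptr123of4_mul_kron4_apply]
  simp only [permOp132of4_mul_apply, pt4_swOp_one_apply]
  simp [ite_and, Matrix.mul_assoc, Matrix.mul_apply, Finset.mul_sum, mul_comm, mul_left_comm]

theorem ptr123of4_permOp132of4_mul_pt4_swOp_two_mul_kron4 :
    ptr123of4 (permOp132of4 d * pt4 (swOp d 2 3) * kron4 A B C) = (C * A * B)ᵀ := by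
  ext a b
  rw [ptr123of4_mul_kron4_apply]
  simp only [permOp132of4_mul_apply, pt4_swOp_two_apply]
  simp [ite_and, Matrix.mul_apply, Finset.mul_sum, mul_comm, mul_left_comm]

end

/-- The positive map induced by the irrep projector `F` evaluated on `A, B, C`. -/
theorem irrep_map_evaluation (d : ℕ) (A B C : Matrix (Fin d) (Fin d) ℂ) :
    ptr123of4 (Fop d * kron4 A B C) =
      (3 : ℂ)⁻¹ • ((B.trace * C.trace) • Aᵀ + (A.trace * C.trace) • Bᵀ +
          (A.trace * B.trace) • Cᵀ) -
        (6 : ℂ)⁻¹ • ((A * C * B)ᵀ + (B * A * C)ᵀ + (C * B * A)ᵀ +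
          (A * B * C)ᵀ + (B * C * A)ᵀ + (C * A * B)ᵀ) := by
  simp only [Fop, smul_mul_assoc, sub_mul, add_mul, ptr123of4_smul, ptr123of4_sub, ptr123of4_add,
    ptr123of4_pt4_swOp_zero_mul_kron4, ptr123of4_pt4_swOp_one_mul_kron4,
    ptr123of4_pt4_swOp_two_mul_kron4,
    ptr123of4_permOp123of4_mul_pt4_swOp_zero_mul_kron4,
    ptr123of4_permOp123of4_mul_pt4_swOp_one_mul_kron4,
    ptr123of4_permOp123of4_mul_pt4_swOp_two_mul_kron4,
    ptr123of4_permOp132of4_mul_pt4_swOp_zero_mul_kron4,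
    ptr123of4_permOp132of4_mul_pt4_swOp_one_mul_kron4,
    ptr123of4_permOp132of4_mul_pt4_swOp_two_mul_kron4]
  module
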